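/- Let s₁ ≈ 1.325 be the unique root in the interval (1,2) of s⁴ + s³ − s² − 2s − 1 = 0. Fix a real s with s₁ ≤ s ≤ (1 + √5)/2 and consider the instance of the favorite-machine scheduling game on two machines with parameter s consisting of four jobs: A of size (s + 1)/(2s + 1) with favorite machine 2; B of size s/(2s + 1) with favorite machine 1; C of size (s + 1)/(2s + 1) with favorite machine 1; and E of size s/(2s + 1) with favorite machine 2. Then the allocation assigning A and C to machine 1 and B and E to machine 2 is a strong equilibrium whose makespan equals (s² + 2s + 1)/(2s + 1), while the optimal makespan of this instance is at most 1. Consequently, the strong price of anarchy at parameter s is at least (s² + 2s + 1)/(2s + 1). -/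

import Mathlib

open Finset

/-- Processing time of job `j` on machine `i` in the favorite-machine model:
`q j` on the favorite machine `f j` and `s * q j` on the other machine. -/
noncomputable def ptime (s : ℝ) {n : ℕ} (q : Fin n → ℝ) (f : Fin n → Fin 2)
    (i : Fin 2) (j : Fin n) : ℝ :=
  if f j = i then q j else s * q j

/-- Load of machine `i` under allocation `x`. -/
noncomputable def load (s : ℝ) {n : ℕ} (q : Fin n → ℝ) (f : Fin n → Fin 2)
    (x : Fin n → Fin 2) (i : Fin 2) : ℝ :=
  ∑ j ∈ Finset.univ.filter (fun j => x j = i), ptime s q f i j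

/-- Makespan (maximum load) of allocation `x`. -/
noncomputable def makespan (s : ℝ) {n : ℕ} (q : Fin n → ℝ) (f : Fin n → Fin 2)
    (x : Fin n → Fin 2) : ℝ :=
  max (load s q f x 0) (load s q f x 1)

/-- The optimal (minimum) makespan over all allocations. -/
noncomputable def optMakespan (s : ℝ) {n : ℕ} (q : Fin n → ℝ) (f : Fin n → Fin 2) : ℝ :=
  ⨅ y : Fin n → Fin 2, makespan s q f y

/-- Pure Nash equilibrium: no job can move to the other machine and find there
a load smaller than its current cost. -/
def IsNE (s : ℝ) {n : ℕ} (q : Fin n → ℝ) (f : Fin n → Fin 2)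
    (x : Fin n → Fin 2) : Prop :=
  ∀ j : Fin n, ∀ i : Fin 2, i ≠ x j →
    load s q f x (x j) ≤ load s q f (Function.update x j i) i

/-- Strong equilibrium: for every deviation `y` differing from `x` on a nonempty
set of jobs, some deviating job does not improve its cost. -/
def IsSE (s : ℝ) {n : ℕ} (q : Fin n → ℝ) (f : Fin n → Fin 2)
    (x : Fin n → Fin 2) : Prop :=
  ∀ y : Fin n → Fin 2, (∃ j, y j ≠ x j) →
    ∃ j, y j ≠ x j ∧ load s q f x (x j) ≤ load s q f y (y j)


/-
Rescaled by `2s + 1`, the jobs A, B, C, E have sizes `s + 1, s, s + 1, s`. In the equilibrium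
the big jobs A, C share machine 1 (index `0`) at cost `(s + 1)²` and the small jobs B, E share
machine 2 at cost `s (s + 1)`, while sending every job to its favorite machine balances both
loads at `2s + 1`. Whatever coalition deviates, some member finds on its new machine jobs whose
processing times already add up to its old cost; the only tight case is B joining C on
machine 1, where `2s + 1 ≥ s (s + 1)` is exactly `s ≤ (1 + √5)/2`.
-/

section Load

variable {s : ℝ} {n : ℕ} {q : Fin n → ℝ} {f : Fin n → Fin 2}

lemma ptime_nonneg (hs : 0 ≤ s) (hq : 0 ≤ q) (i : Fin 2) (j : Fin n) :
    0 ≤ ptime s q f i j := by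
  unfold ptime
  split_ifs
  · exact hq j
  · exact mul_nonneg hs (hq j)

lemma load_nonneg (hs : 0 ≤ s) (hq : 0 ≤ q) (x : Fin n → Fin 2) (i : Fin 2) :
    0 ≤ load s q f x i :=
  Finset.sum_nonneg fun j _ => ptime_nonneg hs hq i j

lemma makespan_nonneg (hs : 0 ≤ s) (hq : 0 ≤ q) (x : Fin n → Fin 2) :
    0 ≤ makespan s q f x :=
  (load_nonneg hs hq x 0).trans (le_max_left _ _)

lemma optMakespan_le_makespan (hs : 0 ≤ s) (hq : 0 ≤ q) (y : Fin n → Fin 2) :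
    optMakespan s q f ≤ makespan s q f y :=
  ciInf_le ⟨0, by rintro _ ⟨z, rfl⟩; exact makespan_nonneg hs hq z⟩ y

lemma sum_ptime_le_load (hs : 0 ≤ s) (hq : 0 ≤ q) {y : Fin n → Fin 2} {i : Fin 2}
    {S : Finset (Fin n)} (hS : ∀ k ∈ S, y k = i) :
    ∑ k ∈ S, ptime s q f i k ≤ load s q f y i :=
  Finset.sum_le_sum_of_subset_of_nonneg (fun k hk => by simpa using hS k hk)
    fun k _ _ => ptime_nonneg hs hq i k

lemma exists_not_improving_of_le_sum_ptime (hs : 0 ≤ s) (hq : 0 ≤ q) {x y : Fin n → Fin 2}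
    {j : Fin n} (hj : y j ≠ x j) {S : Finset (Fin n)} (hS : ∀ k ∈ S, y k = y j)
    (hle : load s q f x (x j) ≤ ∑ k ∈ S, ptime s q f (y j) k) :
    ∃ j, y j ≠ x j ∧ load s q f x (x j) ≤ load s q f y (y j) :=
  ⟨j, hj, hle.trans (sum_ptime_le_load hs hq hS)⟩

lemma load_fin_four (q : Fin 4 → ℝ) (f x : Fin 4 → Fin 2) (i : Fin 2) :
    load s q f x i
      = (if x 0 = i then ptime s q f i 0 else 0) + (if x 1 = i then ptime s q f i 1 else 0)
        + (if x 2 = i then ptime s q f i 2 else 0) + (if x 3 = i then ptime s q f i 3 else 0) := by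
  rw [load, Finset.sum_filter, Fin.sum_univ_four]

lemma ptime_smul (c : ℝ) (i : Fin 2) (j : Fin n) :
    ptime s (c • q) f i j = c * ptime s q f i j := by
  unfold ptime
  split_ifs
  · rfl
  · simp only [Pi.smul_apply, smul_eq_mul]
    ring

lemma load_smul (c : ℝ) (x : Fin n → Fin 2) (i : Fin 2) :
    load s (c • q) f x i = c * load s q f x i := by
  simp only [load, ptime_smul, Finset.mul_sum]

lemma makespan_smul {c : ℝ} (hc : 0 ≤ c) (x : Fin n → Fin 2) :
    makespan s (c • q) f x = c * makespan s q f x := by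
  simp only [makespan, load_smul, mul_max_of_nonneg _ _ hc]

lemma IsSE.smul {x : Fin n → Fin 2} (hx : IsSE s q f x) {c : ℝ} (hc : 0 ≤ c) :
    IsSE s (c • q) f x := by
  intro y hy
  obtain ⟨j, hj, hle⟩ := hx y hy
  exact ⟨j, hj, by simpa only [load_smul] using mul_le_mul_of_nonneg_left hle hc⟩

end Load

namespace GoldenInstance

variable {s : ℝ}

def size (s : ℝ) : Fin 4 → ℝ := ![s + 1, s, s + 1, s]

def fav : Fin 4 → Fin 2 := ![1, 0, 0, 1]

def alloc : Fin 4 → Fin 2 := ![0, 1, 0, 1]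

lemma size_nonneg (hs : 0 ≤ s) : 0 ≤ size s := by
  intro j
  fin_cases j <;> simp [size] <;> linarith

lemma load_alloc_zero : load s (size s) fav alloc 0 = (s + 1) ^ 2 := by
  rw [load_fin_four]
  simp [alloc, ptime, size, fav]
  ring

lemma load_alloc_one : load s (size s) fav alloc 1 = s * (s + 1) := by
  rw [load_fin_four]
  simp [alloc, ptime, size, fav]
  ring

lemma makespan_alloc (hs : 0 ≤ s) : makespan s (size s) fav alloc = (s + 1) ^ 2 := by
  rw [makespan, load_alloc_zero, load_alloc_one, max_eq_left (by nlinarith)]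

lemma makespan_fav : makespan s (size s) fav fav = 2 * s + 1 := by
  rw [makespan, load_fin_four, load_fin_four]
  simp [ptime, size, fav]
  ring_nf
  exact max_self _

theorem isSE_alloc (h1 : 1 ≤ s) (hφ : s ^ 2 ≤ s + 1) : IsSE s (size s) fav alloc := by
  have hs : 0 ≤ s := by linarith
  have two : ∀ i : Fin 2, i = 0 ∨ i = 1 := by decide
  intro y hy
  have blocked := @exists_not_improving_of_le_sum_ptime s 4 (size s) fav hs (size_nonneg hs) alloc y
  have cost_A : load s (size s) fav alloc (alloc 0) = (s + 1) ^ 2 := load_alloc_zero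
  have cost_B : load s (size s) fav alloc (alloc 1) = s * (s + 1) := load_alloc_one
  have cost_C : load s (size s) fav alloc (alloc 2) = (s + 1) ^ 2 := load_alloc_zero
  have cost_E : load s (size s) fav alloc (alloc 3) = s * (s + 1) := load_alloc_one
  rcases two (y 2) with hC | hC
  · by_cases hB : y 1 = 0
    · exact blocked (j := 1) (S := {1, 2}) (by simp [alloc, hB]) (by simp [hB, hC])
        (by rw [cost_B, hB]; simp [ptime, size, fav]; nlinarith)
    by_cases hE : y 3 = 0
    · exact blocked (j := 3) (S := {2, 3}) (by simp [alloc, hE]) (by simp [hE, hC])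
        (by rw [cost_E, hE]; simp [ptime, size, fav]; nlinarith)
    replace hB : y 1 = 1 := Fin.eq_one_of_ne_zero _ hB
    replace hE : y 3 = 1 := Fin.eq_one_of_ne_zero _ hE
    have hA : y 0 = 1 := by
      refine Fin.eq_one_of_ne_zero _ fun hA => ?_
      obtain ⟨j, hj⟩ := hy
      fin_cases j <;> simp_all [alloc]
    exact blocked (j := 0) (S := {0, 1, 3}) (by simp [alloc, hA]) (by simp [hA, hB, hE])
      (by rw [cost_A, hA]; simp [ptime, size, fav]; nlinarith)
  · by_cases hA : y 0 = 1
    · exact blocked (j := 0) (S := {0, 2}) (by simp [alloc, hA]) (by simp [hA, hC])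
        (by rw [cost_A, hA]; simp [ptime, size, fav]; nlinarith)
    replace hA : y 0 = 0 := (two (y 0)).resolve_right hA
    by_cases hB : y 1 = 0
    · exact blocked (j := 1) (S := {0, 1}) (by simp [alloc, hB]) (by simp [hA, hB])
        (by rw [cost_B, hB]; simp [ptime, size, fav]; nlinarith)
    by_cases hE : y 3 = 0
    · exact blocked (j := 3) (S := {0, 3}) (by simp [alloc, hE]) (by simp [hA, hE])
        (by rw [cost_E, hE]; simp [ptime, size, fav]; nlinarith)
    replace hB : y 1 = 1 := Fin.eq_one_of_ne_zero _ hB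
    replace hE : y 3 = 1 := Fin.eq_one_of_ne_zero _ hE
    exact blocked (j := 2) (S := {1, 2, 3}) (by simp [alloc, hC]) (by simp [hB, hC, hE])
      (by rw [cost_C, hC]; simp [ptime, size, fav]; nlinarith)

end GoldenInstance

theorem spoa_lower_interval2_general
    (s₁ : ℝ) (hs₁lo : 1 < s₁)
    (s : ℝ) (hs : s₁ ≤ s) (hs' : s ≤ (1 + Real.sqrt 5)/2)
    (q : Fin 4 → ℝ) (hq : q = ![(s + 1)/(2*s + 1), s/(2*s + 1), (s + 1)/(2*s + 1), s/(2*s + 1)])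
    (f : Fin 4 → Fin 2) (hf : f = ![1, 0, 0, 1])
    (x : Fin 4 → Fin 2) (hx : x = ![0, 1, 0, 1]) :
    IsSE s q f x ∧
      makespan s q f x = (s^2 + 2*s + 1)/(2*s + 1) ∧
      optMakespan s q f ≤ 1 ∧
      ((s^2 + 2*s + 1)/(2*s + 1)) * optMakespan s q f ≤ makespan s q f x := by
  open GoldenInstance in
  have hs₀ : 0 ≤ s := by linarith
  have hφ : s ^ 2 ≤ s + 1 := by
    nlinarith [Real.sq_sqrt (show (0 : ℝ) ≤ 5 by norm_num), Real.sqrt_nonneg 5]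
  have hc : 0 ≤ (2 * s + 1)⁻¹ := by positivity
  have hq' : q = (2 * s + 1)⁻¹ • size s := by
    subst hq
    ext j
    fin_cases j <;> simp [size, div_eq_inv_mul]
  subst hq' hf hx
  have hmk : makespan s ((2 * s + 1)⁻¹ • size s) fav alloc = (s^2 + 2*s + 1)/(2*s + 1) := by
    rw [makespan_smul hc, makespan_alloc hs₀]
    field_simp
    ring
  have hopt : optMakespan s ((2 * s + 1)⁻¹ • size s) fav ≤ 1 := calc
    _ ≤ makespan s ((2 * s + 1)⁻¹ • size s) fav fav :=
      optMakespan_le_makespan hs₀ (smul_nonneg hc (size_nonneg hs₀)) fav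
    _ = 1 := by rw [makespan_smul hc, makespan_fav, inv_mul_cancel₀ (by linarith)]
  refine ⟨(isSE_alloc (by linarith) hφ).smul hc, hmk, hopt, ?_⟩
  exact (mul_le_of_le_one_right (by positivity) hopt).trans_eq hmk.symm

theorem spoa_lower_interval2
    (s₁ : ℝ) (hs₁lo : 1 < s₁) (hs₁hi : s₁ < 2)
    (hs₁root : s₁^4 + s₁^3 - s₁^2 - 2*s₁ - 1 = 0)
    (s : ℝ) (hs : s₁ ≤ s) (hs' : s ≤ (1 + Real.sqrt 5)/2)
    (q : Fin 4 → ℝ) (hq : q = ![(s + 1)/(2*s + 1), s/(2*s + 1), (s + 1)/(2*s + 1), s/(2*s + 1)])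
    (f : Fin 4 → Fin 2) (hf : f = ![1, 0, 0, 1])
    (x : Fin 4 → Fin 2) (hx : x = ![0, 1, 0, 1]) :
    IsSE s q f x ∧
      makespan s q f x = (s^2 + 2*s + 1)/(2*s + 1) ∧
      optMakespan s q f ≤ 1 ∧
      ((s^2 + 2*s + 1)/(2*s + 1)) * optMakespan s q f ≤ makespan s q f x :=
  spoa_lower_interval2_general s₁ hs₁lo s hs hs' q hq f hf x hx
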